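/- arXiv:2303.14735 — 3 statements merged into one kernel-verified Lean document; each statement's English description precedes it below -/
import Mathlib

section
/- Let A be any matrix with zero row sums and zero column sums, and let v ∈ ℂ^N with Av = κv and Aᵀv = κ̃v for some κ, κ̃ ∈ ℂ. Let λ₁, λ₂ be the complex roots of z² + βκκ̃ z + α²κκ̃, and for j ∈ {1,2} define w_j = (κv, λ_j v)ᵀ ∈ ℂ^{2N}. Then B w_j = λ_j w_j for j ∈ {1,2}, where B = [[0, A], [−α²Aᵀ, −βAᵀA]]. -/
/-! On vectors of the form `(x v, y v)` the block matrix acts as the `2 × 2` matrix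
`[[0, κ], [-a κ̃, -b κ κ̃]]`, whose characteristic polynomial is `z² + b κ κ̃ z + a κ κ̃`;
for each root `μ`, `(κ, μ)` is an eigenvector of it with eigenvalue `μ`. -/

namespace Matrix

variable {n R : Type*} [Fintype n] [CommRing R]

theorem transpose_mul_mulVec_eq_smul {A : Matrix n n R} {v : n → R} {κ κt : R}
    (hv : A *ᵥ v = κ • v) (hvt : Aᵀ *ᵥ v = κt • v) :
    (Aᵀ * A) *ᵥ v = (κ * κt) • v := by
  rw [← mulVec_mulVec, hv, mulVec_smul, hvt, smul_smul]

theorem fromBlocks_mulVec_sumElim_smul {A : Matrix n n R} {v : n → R} {κ κt : R}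
    (hv : A *ᵥ v = κ • v) (hvt : Aᵀ *ᵥ v = κt • v) (a b μ : R) :
    fromBlocks 0 A (-(a • Aᵀ)) (-(b • (Aᵀ * A))) *ᵥ Sum.elim (κ • v) (μ • v) =
      Sum.elim ((μ * κ) • v) (-(a * κ * κt + b * κ * κt * μ) • v) := by
  rw [fromBlocks_mulVec, Sum.elim_comp_inl, Sum.elim_comp_inr]
  congr 1
  · rw [zero_mulVec, zero_add, mulVec_smul, hv, smul_smul]
  · rw [neg_mulVec, neg_mulVec, smul_mulVec, smul_mulVec, mulVec_smul, mulVec_smul, hvt,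
      transpose_mul_mulVec_eq_smul hv hvt]
    module

theorem fromBlocks_mulVec_sumElim_smul_eq_of_root {A : Matrix n n R} {v : n → R} {κ κt : R}
    (hv : A *ᵥ v = κ • v) (hvt : Aᵀ *ᵥ v = κt • v) {a b μ : R}
    (hμ : μ ^ 2 + b * κ * κt * μ + a * κ * κt = 0) :
    fromBlocks 0 A (-(a • Aᵀ)) (-(b • (Aᵀ * A))) *ᵥ Sum.elim (κ • v) (μ • v) =
      μ • Sum.elim (κ • v) (μ • v) := by
  have hμ' : -(a * κ * κt + b * κ * κt * μ) = μ * μ := by linear_combination -hμ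
  rw [fromBlocks_mulVec_sumElim_smul hv hvt, hμ']
  ext (i | i) <;> simp only [Pi.smul_apply, Sum.elim_inl, Sum.elim_inr, smul_smul]

end Matrix

theorem B_eigenvectors_from_A_general (N : ℕ) (α β : ℝ)
    (A : Matrix (Fin N) (Fin N) ℂ)
    (v : Fin N → ℂ) (κ κt : ℂ)
    (hv : A.mulVec v = κ • v)
    (hvt : A.transpose.mulVec v = κt • v)
    (B : Matrix (Fin N ⊕ Fin N) (Fin N ⊕ Fin N) ℂ)
    (hB : B = Matrix.fromBlocks 0 A (-((α : ℂ) ^ 2 • A.transpose))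
      (-((β : ℂ) • (A.transpose * A))))
    (lam : Fin 2 → ℂ)
    (hlam : ∀ j, (lam j) ^ 2 + (β : ℂ) * κ * κt * lam j + (α : ℂ) ^ 2 * κ * κt = 0)
    (w : Fin 2 → (Fin N ⊕ Fin N) → ℂ)
    (hw : ∀ j, w j = Sum.elim (κ • v) (lam j • v)) :
    ∀ j, B.mulVec (w j) = lam j • w j := by
  intro j
  rw [hB, hw j]
  exact Matrix.fromBlocks_mulVec_sumElim_smul_eq_of_root hv hvt (hlam j)

theorem B_eigenvectors_from_A (N : ℕ) (α β : ℝ)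
    (A : Matrix (Fin N) (Fin N) ℂ)
    (hrow : ∀ n : Fin N, ∑ m, A n m = 0)
    (hcol : ∀ m : Fin N, ∑ n, A n m = 0)
    (v : Fin N → ℂ) (κ κt : ℂ)
    (hv : A.mulVec v = κ • v)
    (hvt : A.transpose.mulVec v = κt • v)
    (B : Matrix (Fin N ⊕ Fin N) (Fin N ⊕ Fin N) ℂ)
    (hB : B = Matrix.fromBlocks 0 A (-((α : ℂ) ^ 2 • A.transpose))
      (-((β : ℂ) • (A.transpose * A))))
    (lam : Fin 2 → ℂ)
    (hlam : ∀ j, (lam j) ^ 2 + (β : ℂ) * κ * κt * lam j + (α : ℂ) ^ 2 * κ * κt = 0)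
    (w : Fin 2 → (Fin N ⊕ Fin N) → ℂ)
    (hw : ∀ j, w j = Sum.elim (κ • v) (lam j • v)) :
    ∀ j, B.mulVec (w j) = lam j • w j :=
  B_eigenvectors_from_A_general N α β A v κ κt hv hvt B hB lam hlam w hw
end

section
/- Assume α, β > 0 and that β²μ_j − 4α² ≠ 0 for all j ∈ {1,…,N−1}, where μ_j = 2 − 2cos(2πj/N). Then the roots λ_{j,k} = (−βμ_j + (−1)^k √(β²μ_j² − 4α²μ_j))/2 of z² + βμ_j z + α²μ_j satisfy: λ_{j,1} ≠ λ_{j,2} for all j ∈ {1,…,N−1}, and λ_{j,k} ≠ λ_{l,m} whenever j ≠ l are in {1,…,⌊N/2⌋}. Moreover, 0 ∉ {λ_{j,k} : j ∈ {1,…,N−1}, k ∈ {1,2}}. -/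
/-!
Every `λ j k` is a root of `z ^ 2 + β μ_j z + α ^ 2 μ_j`. For `0 < j < N` we have `μ_j > 0`, so the
discriminant `μ_j (β ^ 2 μ_j - 4 α ^ 2)` is nonzero, which separates the two roots, and `0` is not a
root since `α ^ 2 μ_j ≠ 0`. For distinct `j, l ≤ N / 2` the angles `2πj/N`, `2πl/N` lie in `[0, π]`,
where `cos` is injective, so `μ_j ≠ μ_l`; subtracting the two quadratics, a common root would satisfy
`β z + α ^ 2 = 0`, and then `α ^ 4 = 0`.
-/

open Real

lemma Complex.cpow_one_div_two_sq (x : ℂ) : (x ^ ((1 : ℂ) / 2)) ^ 2 = x := by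
  simpa only [one_div] using Complex.cpow_ofNat_inv_pow x 2

section Quadratic

variable {K : Type*} [Field K] [NeZero (2 : K)]

lemma quadratic_eq_zero_of_sq_eq {b c s : K} (hs : s ^ 2 = b ^ 2 - 4 * c) (k : ℕ) :
    ((-b + (-1) ^ k * s) / 2) ^ 2 + b * ((-b + (-1) ^ k * s) / 2) + c = 0 := by
  have hk : ((-1 : K) ^ k) ^ 2 = 1 := by rw [← pow_mul, pow_mul']; simp
  field_simp
  linear_combination s ^ 2 * hk + hs

lemma quadratic_roots_ne {b s : K} (hs : s ≠ 0) :
    (-b + (-1) ^ 1 * s) / 2 ≠ (-b + (-1) ^ 2 * s) / 2 := by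
  intro h
  field_simp at h
  have : (2 : K) * s = 0 := by linear_combination -h
  exact hs ((mul_eq_zero.mp this).resolve_left two_ne_zero)

end Quadratic

lemma eq_zero_of_common_root {R : Type*} [CommRing R] [IsDomain R] {α β μ ν z : R}
    (hμ : z ^ 2 + β * μ * z + α ^ 2 * μ = 0) (hν : z ^ 2 + β * ν * z + α ^ 2 * ν = 0)
    (hμν : μ ≠ ν) : α = 0 := by
  have hlin : β * z + α ^ 2 = 0 :=
    (mul_eq_zero.mp (by linear_combination hμ - hν : (μ - ν) * (β * z + α ^ 2) = 0)).resolve_left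
      (sub_ne_zero.mpr hμν)
  exact pow_eq_zero_iff (n := 4) (by norm_num) |>.mp <| by
    linear_combination β ^ 2 * hμ + (α ^ 2 - β * z - β ^ 2 * μ) * hlin

lemma cos_two_pi_mul_div_lt_one {j N : ℕ} (hj : 0 < j) (hjN : j < N) :
    cos (2 * π * j / N) < 1 := by
  have hN : (0 : ℝ) < N := by exact_mod_cast hj.trans hjN
  have hjN' : (j : ℝ) < N := by exact_mod_cast hjN
  have hpos : 0 < 2 * π * j / N := by positivity
  have hlt : 2 * π * j / N < 2 * π := by
    rw [div_lt_iff₀ hN]; nlinarith [pi_pos]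
  refine (cos_le_one _).lt_of_ne fun h => ?_
  have := (cos_eq_one_iff_of_lt_of_lt (by linarith) hlt).mp h
  linarith

lemma injOn_cos_two_pi_mul_div (N : ℕ) :
    Set.InjOn (fun j : ℕ => cos (2 * π * j / N)) {j | 2 * j ≤ N} := by
  intro j hj l hl h
  rcases N.eq_zero_or_pos with rfl | hN
  · simp_all
  have hN' : (0 : ℝ) < N := by exact_mod_cast hN
  have hmem : ∀ m : ℕ, 2 * m ≤ N → 2 * π * m / N ∈ Set.Icc 0 π := fun m hm => by
    have : 2 * (m : ℝ) ≤ N := by exact_mod_cast hm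
    refine ⟨by positivity, ?_⟩
    rw [div_le_iff₀ hN']; nlinarith [pi_pos]
  have := injOn_cos (hmem j hj) (hmem l hl) h
  field_simp at this
  exact_mod_cast this

theorem eigenvalues_distinct_general (N : ℕ)
    (α β : ℝ) (hα : 0 < α)
    (μ : ℕ → ℝ) (hμ : ∀ j, μ j = 2 - 2 * Real.cos (2 * Real.pi * j / N))
    (hcond : ∀ j ∈ Finset.Icc 1 (N - 1), β ^ 2 * μ j - 4 * α ^ 2 ≠ 0)
    (lam : ℕ → ℕ → ℂ)
    (hlam : ∀ j k, lam j k =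
      (-(β * μ j : ℝ) + (-1 : ℂ) ^ k *
        ((β ^ 2 * (μ j) ^ 2 - 4 * α ^ 2 * μ j : ℝ) : ℂ) ^ ((1 : ℂ) / 2)) / 2) :
    (∀ j ∈ Finset.Icc 1 (N - 1), lam j 1 ≠ lam j 2) ∧
    (∀ j ∈ Finset.Icc 1 (N / 2), ∀ l ∈ Finset.Icc 1 (N / 2), j ≠ l →
      ∀ k ∈ ({1, 2} : Finset ℕ), ∀ m ∈ ({1, 2} : Finset ℕ), lam j k ≠ lam l m) ∧
    (∀ j ∈ Finset.Icc 1 (N - 1), ∀ k ∈ ({1, 2} : Finset ℕ), lam j k ≠ 0) := by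
  have hμ_pos : ∀ j ∈ Finset.Icc 1 (N - 1), 0 < μ j := fun j hj => by
    rw [Finset.mem_Icc] at hj
    linarith [hμ j, cos_two_pi_mul_div_lt_one (j := j) (N := N) (by omega) (by omega)]
  have hroot : ∀ j k, (lam j k) ^ 2 + β * μ j * lam j k + α ^ 2 * μ j = 0 := fun j k => by
    have hsq : (((β ^ 2 * μ j ^ 2 - 4 * α ^ 2 * μ j : ℝ) : ℂ) ^ ((1 : ℂ) / 2)) ^ 2 =
        (β * μ j : ℂ) ^ 2 - 4 * (α ^ 2 * μ j) := by
      rw [Complex.cpow_one_div_two_sq]; push_cast; ring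
    rw [hlam]
    push_cast at hsq ⊢
    linear_combination quadratic_eq_zero_of_sq_eq hsq k
  refine ⟨fun j hj => ?_, fun j hj l hl hjl k _ m _ h => ?_, fun j hj k _ h => ?_⟩
  · rw [hlam, hlam]
    refine quadratic_roots_ne fun h0 => ?_
    rw [Complex.cpow_eq_zero_iff, Complex.ofReal_eq_zero] at h0
    exact mul_ne_zero (hμ_pos j hj).ne' (hcond j hj) (by linear_combination h0.1)
  · rw [Finset.mem_Icc] at hj hl
    have hμ_ne : μ j ≠ μ l := fun hμjl => hjl <|
      injOn_cos_two_pi_mul_div N (show 2 * j ≤ N by omega)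
        (show 2 * l ≤ N by omega) (by linarith [hμ j, hμ l])
    have := eq_zero_of_common_root (hroot j k) (h ▸ hroot l m) (by exact_mod_cast hμ_ne)
    exact hα.ne' (by exact_mod_cast this)
  · have := hroot j k
    simp only [h, ne_eq, OfNat.ofNat_ne_zero, not_false_eq_true, zero_pow, mul_zero, zero_add]
      at this
    norm_cast at this
    exact (mul_pos (pow_pos hα 2) (hμ_pos j hj)).ne' this

theorem eigenvalues_distinct (N : ℕ) (hN : 3 ≤ N)
    (α β : ℝ) (hα : 0 < α) (hβ : 0 < β)
    (μ : ℕ → ℝ) (hμ : ∀ j, μ j = 2 - 2 * Real.cos (2 * Real.pi * j / N))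
    (hcond : ∀ j ∈ Finset.Icc 1 (N - 1), β ^ 2 * μ j - 4 * α ^ 2 ≠ 0)
    (lam : ℕ → ℕ → ℂ)
    (hlam : ∀ j k, lam j k =
      (-(β * μ j : ℝ) + (-1 : ℂ) ^ k *
        ((β ^ 2 * (μ j) ^ 2 - 4 * α ^ 2 * μ j : ℝ) : ℂ) ^ ((1 : ℂ) / 2)) / 2) :
    (∀ j ∈ Finset.Icc 1 (N - 1), lam j 1 ≠ lam j 2) ∧
    (∀ j ∈ Finset.Icc 1 (N / 2), ∀ l ∈ Finset.Icc 1 (N / 2), j ≠ l →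
      ∀ k ∈ ({1, 2} : Finset ℕ), ∀ m ∈ ({1, 2} : Finset ℕ), lam j k ≠ lam l m) ∧
    (∀ j ∈ Finset.Icc 1 (N - 1), ∀ k ∈ ({1, 2} : Finset ℕ), lam j k ≠ 0) :=
  eigenvalues_distinct_general N α β hα μ hμ hcond lam hlam
end

section
/- For N ≥ 2 and integers l, m ∈ {1,…,N}, the Dowker-type cosecant sum satisfies (1/(2N)) Σ_{j=1}^{N−1} cos(2πj(l−m)/N)/(1 − cos(2πj/N)) = (1/(2N)) [ (l−m)² − N|l−m| + (N²−1)/6 ]. Equivalently, the (l,m)-entry of K = Σ_{j=1}^{N−1} v_j v_j*/μ_j equals (1/(2N))[(l−m)² − N|l−m| + (N²−1)/6]. -/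
open Complex Real

open Finset

-- L1
private lemma dsum_mul_geom (n : ℕ) (z : ℂ) :
    (z - 1) ^ 2 * ∑ k ∈ range n, (k : ℂ) * z ^ k
      = (n - 1) * z ^ (n + 1) - n * z ^ n + z := by
  induction n with
  | zero => simp
  | succ n ih =>
    rw [Finset.sum_range_succ, mul_add]
    rw [ih]
    push_cast
    ring

-- L2
private lemma dsum_sq_mul_geom (n : ℕ) (z : ℂ) :
    (z - 1) ^ 3 * ∑ k ∈ range n, (k : ℂ) ^ 2 * z ^ k
      = ((n:ℂ) - 1) ^ 2 * z ^ (n + 2) + (-2 * n ^ 2 + 2 * n + 1) * z ^ (n + 1)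
        + (n:ℂ) ^ 2 * z ^ n - z ^ 2 - z := by
  induction n with
  | zero => simp
  | succ n ih =>
    rw [Finset.sum_range_succ, mul_add]
    rw [ih]
    push_cast
    ring

-- key identity for N-th roots of unity
private lemma dsum_F (N : ℕ) (z : ℂ) (hz1 : z ≠ 1) (hzN : z ^ N = 1) :
    (z - 1) ^ 2 * ∑ k ∈ range N, ((k : ℂ) ^ 2 - N * k) * z ^ k = -2 * N * z := by
  have hsplit : ∑ k ∈ range N, ((k : ℂ) ^ 2 - N * k) * z ^ k
      = (∑ k ∈ range N, (k : ℂ) ^ 2 * z ^ k) - (N : ℂ) * ∑ k ∈ range N, (k : ℂ) * z ^ k := by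
    rw [Finset.mul_sum, ← Finset.sum_sub_distrib]
    exact Finset.sum_congr rfl fun k _ => by ring
  have e1 : z ^ (N + 1) = z := by rw [pow_succ, hzN, one_mul]
  have e2 : z ^ (N + 2) = z * z := by
    have : z ^ (N + 2) = z ^ (N + 1) * z := pow_succ z (N + 1)
    rw [this, e1]
  have hs := dsum_sq_mul_geom N z
  have hl := dsum_mul_geom N z
  rw [e2, e1, hzN] at hs
  rw [e1, hzN] at hl
  have h3 : (z - 1) ^ 3 * ∑ k ∈ range N, ((k : ℂ) ^ 2 - N * k) * z ^ k
      = -2 * N * z * (z - 1) := by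
    rw [hsplit]
    linear_combination hs - (N : ℂ) * (z - 1) * hl
  have hz1' : z - 1 ≠ 0 := sub_ne_zero.mpr hz1
  apply mul_left_cancel₀ hz1'
  linear_combination h3

-- per-root lemma: (1 - cos θ) * F = N
private lemma dsum_cos (N : ℕ) (θ : ℝ) (z : ℂ) (hz : z = Complex.exp ((θ : ℂ) * I))
    (hz1 : z ≠ 1) (hzN : z ^ N = 1) :
    ((1 - Real.cos θ : ℝ) : ℂ) * ∑ k ∈ range N, ((k : ℂ) ^ 2 - N * k) * z ^ k = N := by
  have pyth : ((Real.sin θ : ℂ)) ^ 2 + ((Real.cos θ : ℂ)) ^ 2 = 1 := by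
    exact_mod_cast Real.sin_sq_add_cos_sq θ
  have hz2 : (z - 1) ^ 2 = -2 * z * ((1 - Real.cos θ : ℝ) : ℂ) := by
    rw [hz, Complex.exp_mul_I]
    push_cast at pyth ⊢
    linear_combination (Complex.sin (θ : ℂ)) ^ 2 * Complex.I_sq - pyth
  have hKI := dsum_F N z hz1 hzN
  have hz1' : (z - 1) ^ 2 ≠ 0 := pow_ne_zero 2 (sub_ne_zero.mpr hz1)
  apply mul_left_cancel₀ hz1'
  linear_combination ((1 - Real.cos θ : ℝ) : ℂ) * hKI - (N : ℂ) * hz2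

private lemma dgeom_zero (N : ℕ) (x : ℂ) (hx1 : x ≠ 1) (hxN : x ^ N = 1) :
    ∑ j ∈ range N, x ^ j = 0 := by
  have h := geom_sum_mul x N
  rw [hxN, sub_self] at h
  rcases mul_eq_zero.mp h with h' | h'
  · exact h'
  · exact absurd (sub_eq_zero.mp h') hx1

private lemma dsum_id (n : ℕ) : (∑ k ∈ range n, (k : ℂ)) * 2 = n * (n - 1) := by
  induction n with
  | zero => simp
  | succ n ih => rw [Finset.sum_range_succ, add_mul, ih]; push_cast; ring

private lemma dsum_sq (n : ℕ) : (∑ k ∈ range n, (k : ℂ) ^ 2) * 6 = n * (n - 1) * (2 * n - 1) := by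
  induction n with
  | zero => simp
  | succ n ih => rw [Finset.sum_range_succ, add_mul, ih]; push_cast; ring

private lemma dsum_const (N : ℕ) :
    (∑ k ∈ range N, ((k : ℂ) ^ 2 - N * k)) * 6 = -(N * ((N : ℂ) ^ 2 - 1)) := by
  rw [Finset.sum_sub_distrib, ← Finset.mul_sum]
  have a := dsum_id N
  have b := dsum_sq N
  linear_combination b - 3 * (N : ℂ) * a

private lemma dfilter_singleton (N : ℕ) (hN : 0 < N) (d : ℤ) (k₀ : ℕ) (hk₀ : k₀ < N)
    (hdvd : (N : ℤ) ∣ d + k₀) :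
    (range N).filter (fun k : ℕ => (N : ℤ) ∣ d + (k : ℤ)) = ({k₀} : Finset ℕ) := by
  ext k
  simp only [Finset.mem_filter, Finset.mem_range, Finset.mem_singleton]
  constructor
  · rintro ⟨hk, hd2⟩
    have hdvd2 : (N : ℤ) ∣ (k - k₀ : ℤ) := by
      have := dvd_sub hd2 hdvd
      simpa using this
    have habs : |(k : ℤ) - k₀| < N := by
      rw [abs_lt]; omega
    have := Int.eq_zero_of_abs_lt_dvd hdvd2 habs
    omega
  · rintro rfl
    exact ⟨hk₀, hdvd⟩

private lemma dmaster (N : ℕ) (hN : 2 ≤ N) (ω : ℂ)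
    (hω : ω = Complex.exp (2 * Real.pi * Complex.I / N))
    (d : ℤ) (hd : d.natAbs < N) :
    ∑ j ∈ Finset.Icc 1 (N - 1),
        ω ^ ((j : ℤ) * d) * ((1 - Real.cos (2 * Real.pi * j / N) : ℝ) : ℂ)⁻¹
      = (((d : ℝ) ^ 2 - N * |(d : ℝ)| + ((N : ℝ) ^ 2 - 1) / 6 : ℝ) : ℂ) := by
  have hN0 : N ≠ 0 := by omega
  have hNC : (N : ℂ) ≠ 0 := Nat.cast_ne_zero.mpr hN0
  have hprim : IsPrimitiveRoot ω N := hω ▸ Complex.isPrimitiveRoot_exp N hN0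
  have hω0 : ω ≠ 0 := by rw [hω]; exact Complex.exp_ne_zero _
  -- step A : termwise rewrite
  have hterm : ∀ j ∈ Finset.Icc 1 (N - 1),
      ω ^ ((j : ℤ) * d) * ((1 - Real.cos (2 * Real.pi * j / N) : ℝ) : ℂ)⁻¹
        = (N : ℂ)⁻¹ * ∑ k ∈ range N, ((k : ℂ) ^ 2 - N * k) * ω ^ ((j : ℤ) * (d + k)) := by
    intro j hj
    rw [Finset.mem_Icc] at hj
    set z := ω ^ j with hzdef
    have hz1 : z ≠ 1 := hprim.pow_ne_one_of_pos_of_lt (by omega) (by omega)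
    have hzN : z ^ N = 1 := by
      rw [hzdef, ← pow_mul, mul_comm, pow_mul, hprim.pow_eq_one, one_pow]
    have hzexp : z = Complex.exp (((2 * Real.pi * j / N : ℝ) : ℂ) * I) := by
      rw [hzdef, hω, ← Complex.exp_nat_mul]
      congr 1
      push_cast
      ring
    have hF := dsum_cos N (2 * Real.pi * j / N) z hzexp hz1 hzN
    have hcne : ((1 - Real.cos (2 * Real.pi * j / N) : ℝ) : ℂ) ≠ 0 := by
      intro h
      rw [h, zero_mul] at hF
      exact hNC hF.symm
    have hinv : ((1 - Real.cos (2 * Real.pi * j / N) : ℝ) : ℂ)⁻¹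
        = (N : ℂ)⁻¹ * ∑ k ∈ range N, ((k : ℂ) ^ 2 - N * k) * z ^ k := by
      refine inv_eq_of_mul_eq_one_right ?_
      rw [mul_left_comm, hF, inv_mul_cancel₀ hNC]
    rw [hinv, mul_left_comm]
    congr 1
    rw [Finset.mul_sum]
    refine Finset.sum_congr rfl fun k _ => ?_
    have hzk : z ^ k = ω ^ ((j : ℤ) * k) := by
      rw [hzdef, ← pow_mul, ← zpow_natCast]
      norm_cast
    rw [hzk, mul_left_comm, ← zpow_add₀ hω0,
      show (j : ℤ) * d + (j : ℤ) * k = (j : ℤ) * (d + k) by ring]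
  rw [Finset.sum_congr rfl hterm, ← Finset.mul_sum, Finset.sum_comm]
  -- step C : inner sums
  have hinner : ∀ k ∈ range N,
      ∑ j ∈ Finset.Icc 1 (N - 1), ((k : ℂ) ^ 2 - N * k) * ω ^ ((j : ℤ) * (d + k))
        = ((k : ℂ) ^ 2 - N * k) * ((if (N : ℤ) ∣ (d + k) then (N : ℂ) else 0) - 1) := by
    intro k _
    rw [← Finset.mul_sum]
    congr 1
    have hset : Finset.Icc 1 (N - 1) = (range N).erase 0 := by
      ext x
      simp only [Finset.mem_Icc, Finset.mem_erase, Finset.mem_range]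
      omega
    rw [hset, Finset.sum_erase_eq_sub (Finset.mem_range.mpr (by omega))]
    have hterm2 : ∀ j : ℕ, ω ^ ((j : ℤ) * (d + k)) = (ω ^ (d + (k : ℤ))) ^ j := by
      intro j
      rw [← zpow_natCast (ω ^ (d + (k : ℤ))) j, ← zpow_mul]
      congr 1
      ring
    simp only [hterm2]
    rw [pow_zero]
    by_cases hdvd : (N : ℤ) ∣ (d + k)
    · rw [if_pos hdvd, (hprim.zpow_eq_one_iff_dvd _).mpr hdvd]
      simp
    · rw [if_neg hdvd]
      have h1 : ω ^ (d + (k : ℤ)) ≠ 1 := fun h => hdvd ((hprim.zpow_eq_one_iff_dvd _).mp h)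
      have hN1 : (ω ^ (d + (k : ℤ))) ^ N = 1 := by
        rw [← zpow_natCast (ω ^ (d + (k : ℤ))) N, ← zpow_mul, mul_comm, zpow_mul,
          zpow_natCast, hprim.pow_eq_one, one_zpow]
      rw [dgeom_zero N _ h1 hN1]
  rw [Finset.sum_congr rfl hinner]
  -- step D : split the ite sum
  have hsplit2 : ∑ k ∈ range N, ((k : ℂ) ^ 2 - N * k) * ((if (N : ℤ) ∣ (d + k) then (N : ℂ) else 0) - 1)
      = (N : ℂ) * (∑ k ∈ (range N).filter (fun k : ℕ => (N : ℤ) ∣ d + (k : ℤ)), ((k : ℂ) ^ 2 - N * k))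
        - ∑ k ∈ range N, ((k : ℂ) ^ 2 - N * k) := by
    rw [Finset.mul_sum, Finset.sum_filter, ← Finset.sum_sub_distrib]
    refine Finset.sum_congr rfl fun k _ => ?_
    by_cases h : (N : ℤ) ∣ (d + k) <;> simp [h] <;> ring
  rw [hsplit2]
  -- step E : the filter is a singleton
  obtain ⟨k₀, hk₀, hdvd, hval⟩ : ∃ k₀ : ℕ, k₀ < N ∧ (N : ℤ) ∣ d + k₀ ∧
      ((k₀ : ℝ) ^ 2 - N * k₀ = (d : ℝ) ^ 2 - N * |(d : ℝ)|) := by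
    have hna : ((d.natAbs : ℝ)) = |(d : ℝ)| := by
      rw [Nat.cast_natAbs, Int.cast_abs]
    rcases lt_trichotomy d 0 with h | h | h
    · refine ⟨d.natAbs, hd, ⟨0, by omega⟩, ?_⟩
      rw [hna, _root_.sq_abs]
    · subst h
      exact ⟨0, by omega, by simp, by simp⟩
    · refine ⟨N - d.natAbs, by omega, ⟨1, by push_cast; omega⟩, ?_⟩
      have h1 : ((N - d.natAbs : ℕ) : ℝ) = (N : ℝ) - |(d : ℝ)| := by
        rw [← hna]; push_cast [Nat.cast_sub (le_of_lt hd)]; ring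
      rw [h1]
      have h2 : |(d : ℝ)| = (d : ℝ) := abs_of_nonneg (by exact_mod_cast le_of_lt h)
      rw [h2]
      ring
  rw [dfilter_singleton N (by omega) d k₀ hk₀ hdvd, Finset.sum_singleton]
  -- step F : final arithmetic
  have hvalC : ((k₀ : ℂ) ^ 2 - N * k₀) = (((d : ℝ) ^ 2 - N * |(d : ℝ)| : ℝ) : ℂ) := by
    rw [← hval]
    push_cast
    ring
  have hconst := dsum_const N
  rw [hvalC]
  have hsep : ∑ k ∈ range N, ((k : ℂ) ^ 2 - N * k)
      = (∑ k ∈ range N, (k : ℂ) ^ 2) - ∑ k ∈ range N, (N : ℂ) * k :=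
    Finset.sum_sub_distrib _ _
  push_cast
  field_simp
  have hS' : ∑ x ∈ range N, (x : ℂ) * ((x : ℂ) - N) = ∑ k ∈ range N, ((k : ℂ) ^ 2 - N * k) :=
    Finset.sum_congr rfl fun _ _ => by ring
  linear_combination - hconst - 6 * hS'

theorem dowker_sum_closed_form (N : ℕ) (hN : 2 ≤ N)
    (ω : ℂ) (hω : ω = Complex.exp (2 * Real.pi * Complex.I / N))
    (v : Fin N → Fin N → ℂ)
    (hv : ∀ j k, v j k = ω ^ (j.val * k.val) / (Real.sqrt N : ℂ))
    (μ : ℕ → ℝ) (hμ : ∀ j, μ j = 2 - 2 * Real.cos (2 * Real.pi * j / N))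
    (K : Matrix (Fin N) (Fin N) ℂ)
    (hK : K = ∑ j ∈ Finset.univ.filter (fun j : Fin N => j.val ≠ 0),
      ((μ j.val : ℂ))⁻¹ • Matrix.of (fun k l => v j k * (starRingEnd ℂ) (v j l))) :
    ∀ l m : Fin N,
      (1 / (2 * N) * ∑ j ∈ Finset.Icc 1 (N - 1),
          Real.cos (2 * Real.pi * j * ((l.val : ℝ) - m.val) / N)
            / (1 - Real.cos (2 * Real.pi * j / N))
        = 1 / (2 * N) * (((l.val : ℝ) - m.val) ^ 2 - N * |(l.val : ℝ) - m.val|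
            + ((N : ℝ) ^ 2 - 1) / 6)) ∧
      K l m = ((1 / (2 * N) * (((l.val : ℝ) - m.val) ^ 2 - N * |(l.val : ℝ) - m.val|
            + ((N : ℝ) ^ 2 - 1) / 6) : ℝ) : ℂ) := by
  intro l m
  have hN0 : N ≠ 0 := by omega
  have hω0 : ω ≠ 0 := by rw [hω]; exact Complex.exp_ne_zero _
  set d : ℤ := (l.val : ℤ) - m.val with hddef
  have hd : d.natAbs < N := by
    have h1 := l.isLt
    have h2 := m.isLt
    omega
  have hdr : ((l.val : ℝ) - m.val) = (d : ℝ) := by rw [hddef]; push_cast; ring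
  have hM := dmaster N hN ω hω d hd
  rw [hdr]
  constructor
  · -- Part 1
    congr 1
    have hre := congrArg Complex.re hM
    rw [Complex.ofReal_re, Complex.re_sum] at hre
    rw [← hre]
    refine Finset.sum_congr rfl fun j _ => ?_
    have h1 : ω ^ ((j : ℤ) * d)
        = Complex.exp (((2 * Real.pi * j * (d : ℝ) / N : ℝ) : ℂ) * I) := by
      rw [hω, ← Complex.exp_int_mul]
      congr 1
      push_cast
      ring
    rw [h1, ← Complex.ofReal_inv]
    simp only [Complex.mul_re, Complex.ofReal_re, Complex.ofReal_im,
      Complex.exp_ofReal_mul_I_re, mul_zero, sub_zero]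
    rw [div_eq_mul_inv]
  · -- Part 2
    rw [hK, Matrix.sum_apply]
    have hconj : (starRingEnd ℂ) ω = ω⁻¹ := by
      rw [hω, ← Complex.exp_conj, ← Complex.exp_neg]
      congr 1
      simp [map_div₀, Complex.conj_I, map_ofNat]
      ring
    have hden : (Real.sqrt N : ℂ) * (Real.sqrt N : ℂ) = (N : ℂ) := by
      rw [← Complex.ofReal_mul, Real.mul_self_sqrt (Nat.cast_nonneg N)]
      push_cast
      rfl
    have hvprod : ∀ j : Fin N,
        v j l * (starRingEnd ℂ) (v j m) = ω ^ ((j.val : ℤ) * d) * (N : ℂ)⁻¹ := by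
      intro j
      rw [hv, hv, map_div₀, map_pow, hconj, Complex.conj_ofReal, div_mul_div_comm, hden]
      have hnum : ω ^ (j.val * l.val) * (ω⁻¹) ^ (j.val * m.val) = ω ^ ((j.val : ℤ) * d) := by
        rw [← zpow_natCast ω (j.val * l.val), ← zpow_natCast ω⁻¹ (j.val * m.val),
          inv_zpow, ← zpow_neg, ← zpow_add₀ hω0]
        congr 1
        rw [hddef]
        push_cast
        ring
      rw [hnum, div_eq_mul_inv]
    have hterm : ∀ j : Fin N,
        ((μ j.val : ℝ) : ℂ)⁻¹ * (v j l * (starRingEnd ℂ) (v j m))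
          = (2 * (N : ℂ))⁻¹ *
            (ω ^ ((j.val : ℤ) * d) * ((1 - Real.cos (2 * Real.pi * j.val / N) : ℝ) : ℂ)⁻¹) := by
      intro j
      rw [hvprod j, hμ]
      rw [show ((2 - 2 * Real.cos (2 * Real.pi * j.val / N) : ℝ) : ℂ)
          = 2 * ((1 - Real.cos (2 * Real.pi * j.val / N) : ℝ) : ℂ) by push_cast; ring]
      rw [mul_inv, mul_inv]
      ring
    calc ∑ j ∈ Finset.univ.filter (fun j : Fin N => j.val ≠ 0),
          (((μ j.val : ℝ) : ℂ)⁻¹ • Matrix.of (fun k l' => v j k * (starRingEnd ℂ) (v j l'))) l m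
        = ∑ j ∈ Finset.univ.filter (fun j : Fin N => j.val ≠ 0),
            (2 * (N : ℂ))⁻¹ *
              (ω ^ ((j.val : ℤ) * d) * ((1 - Real.cos (2 * Real.pi * j.val / N) : ℝ) : ℂ)⁻¹) := by
          refine Finset.sum_congr rfl fun j _ => ?_
          rw [Matrix.smul_apply, Matrix.of_apply, smul_eq_mul]
          exact hterm j
      _ = (2 * (N : ℂ))⁻¹ * ∑ j ∈ Finset.univ.filter (fun j : Fin N => j.val ≠ 0),
            (ω ^ ((j.val : ℤ) * d) * ((1 - Real.cos (2 * Real.pi * j.val / N) : ℝ) : ℂ)⁻¹) := by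
          rw [Finset.mul_sum]
      _ = (2 * (N : ℂ))⁻¹ * ∑ n ∈ Finset.Icc 1 (N - 1),
            (ω ^ ((n : ℤ) * d) * ((1 - Real.cos (2 * Real.pi * n / N) : ℝ) : ℂ)⁻¹) := by
          congr 1
          rw [Finset.sum_filter,
            Fin.sum_univ_eq_sum_range (fun i => if i ≠ 0 then
              ω ^ ((i : ℤ) * d) * ((1 - Real.cos (2 * Real.pi * i / N) : ℝ) : ℂ)⁻¹ else 0),
            ← Finset.sum_filter]
          congr 1
          ext x
          simp only [Finset.mem_filter, Finset.mem_range, Finset.mem_Icc]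
          omega
      _ = ((1 / (2 * N) * ((d : ℝ) ^ 2 - N * |(d : ℝ)| + ((N : ℝ) ^ 2 - 1) / 6) : ℝ) : ℂ) := by
          rw [hM]
          push_cast
          ring
end
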